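/- arXiv:2304.01845 — 3 statements merged into one kernel-verified Lean document; each statement's English description precedes it below -/
import Mathlib

section
/- Let X be a quantum-Wajsberg algebra in which every filter of X is a deductive system of X. Then every maximal filter of X is strongly maximal. -/
/-- The underlying involutive bounded BE algebra of a quantum-Wajsberg algebra. -/
class PreQW (X : Type*) where
  imp : X → X → X
  zero : X
  one : X
  imp_self : ∀ x : X, imp x x = one
  imp_one : ∀ x : X, imp x one = one
  one_imp : ∀ x : X, imp one x = x
  exchange : ∀ x y z : X, imp x (imp y z) = imp y (imp x z)
  zero_imp : ∀ x : X, imp zero x = one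
  involutive : ∀ x : X, imp (imp x zero) zero = x

namespace PreQW

variable {X : Type*} [PreQW X]

/-- `x* = x → 0`. -/
def qstar (x : X) : X := imp x zero

/-- `x ⊔ y = (x → y) → y`. -/
def qsup (x y : X) : X := imp (imp x y) y

/-- `x ⊓ y = ((x* → y*) → y*)*`. -/
def qinf (x y : X) : X := qstar (imp (imp (qstar x) (qstar y)) (qstar y))

/-- `x ⊙ y = (x → y*)*`. -/
def qprod (x y : X) : X := qstar (imp x (qstar y))

/-- `x ≤ y` iff `x → y = 1`. -/
def qle (x y : X) : Prop := imp x y = one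

/-- `x ≤_Q y` iff `x = x ⊓ y`. -/
def qleQ (x y : X) : Prop := x = qinf x y

/-- `xⁿ = x ⊙ ⋯ ⊙ x` (`n` factors), with `x⁰ = 1`. -/
def qpow (x : X) : ℕ → X
  | 0 => one
  | n + 1 => qprod x (qpow x n)

/-- A filter: nonempty, closed under `⊙`, and `x ∈ F` implies `y → x ∈ F`. -/
def IsFilter (F : Set X) : Prop :=
  F.Nonempty ∧ (∀ x ∈ F, ∀ y ∈ F, qprod x y ∈ F) ∧ (∀ x ∈ F, ∀ y : X, imp y x ∈ F)

/-- A deductive system: contains `1` and is closed under modus ponens. -/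
def IsDS (F : Set X) : Prop :=
  (one : X) ∈ F ∧ ∀ x ∈ F, ∀ y : X, imp x y ∈ F → y ∈ F

/-- A maximal filter: proper and not strictly contained in any proper filter. -/
def IsMaximal (F : Set X) : Prop :=
  IsFilter F ∧ F ≠ Set.univ ∧
    ∀ G : Set X, IsFilter G → F ⊆ G → G ≠ Set.univ → G = F

/-- The strong maximality condition: for every `x ∉ F`, `(xⁿ)* ∈ F` for some `n ≥ 1`. -/
def StrongMaxCond (F : Set X) : Prop :=
  ∀ x : X, x ∉ F → ∃ n : ℕ, 1 ≤ n ∧ qstar (qpow x n) ∈ F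

/-- A strongly maximal filter. -/
def IsStronglyMaximal (F : Set X) : Prop :=
  IsFilter F ∧ StrongMaxCond F

/-- `x ∼ y`: there is `α` with `x ≤ α ≤ x` and `y ≤ α ≤ y`. -/
def Persp (x y : X) : Prop :=
  ∃ α : X, imp x α = one ∧ imp α x = one ∧ imp y α = one ∧ imp α y = one

/-- `x ≡_F y` iff there is `λ` with `x, y ≤_Q λ` and `λ → x, λ → y ∈ F`. -/
def equivF (F : Set X) (x y : X) : Prop :=
  ∃ l : X, qleQ x l ∧ qleQ y l ∧ imp l x ∈ F ∧ imp l y ∈ F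

end PreQW

/-- A quantum-Wajsberg algebra: an involutive BE algebra satisfying axiom (QW). -/
class QW (X : Type*) extends PreQW X where
  qw : ∀ x y z : X,
    imp x (PreQW.qinf (PreQW.qinf x y) (PreQW.qinf z x)) =
      PreQW.qinf (imp x y) (imp x z)


open PreQW

section AuxLemmas

variable {X : Type*} [QW X]

private lemma qw_ss (x : X) : qstar (qstar x) = x := PreQW.involutive x

private lemma qw_st_one : qstar (one : X) = zero := PreQW.one_imp zero

private lemma qw_st_zero : qstar (zero : X) = one := PreQW.zero_imp zero

private lemma qw_swap_star (a b : X) : imp a (qstar b) = imp b (qstar a) :=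
  PreQW.exchange a b zero

private lemma qw_st_prod (a b : X) : qstar (qprod a b) = imp a (qstar b) :=
  qw_ss (imp a (qstar b))

private lemma qw_prod_comm (a b : X) : qprod a b = qprod b a :=
  congrArg qstar (qw_swap_star a b)

private lemma qw_prod_one (a : X) : qprod a (one : X) = a := by
  show qstar (imp a (qstar one)) = a
  rw [qw_st_one]
  exact qw_ss a

private lemma qw_one_prod (a : X) : qprod (one : X) a = a := by
  show qstar (imp one (qstar a)) = a
  rw [PreQW.one_imp]
  exact qw_ss a

private lemma qw_prod_assoc (a b c : X) :
    qprod (qprod a b) c = qprod a (qprod b c) := by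
  have e : imp (qprod a b) (qstar c) = imp a (qstar (qprod b c)) := by
    rw [qw_swap_star (qprod a b) c, qw_st_prod a b, PreQW.exchange c a (qstar b),
      qw_swap_star c b, qw_st_prod b c]
  exact congrArg qstar e

private lemma qw_qpow_add (x : X) (m n : ℕ) :
    qpow x (m + n) = qprod (qpow x m) (qpow x n) := by
  induction m with
  | zero =>
    rw [Nat.zero_add]
    exact (qw_one_prod (qpow x n)).symm
  | succ k ih =>
    have e : k + 1 + n = (k + n) + 1 := by omega
    rw [e]
    show qprod x (qpow x (k + n)) = qprod (qpow x (k + 1)) (qpow x n)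
    rw [ih]
    show qprod x (qprod (qpow x k) (qpow x n)) = qprod (qprod x (qpow x k)) (qpow x n)
    exact (qw_prod_assoc _ _ _).symm

private lemma qw_qinf_zero (x : X) : qinf x (zero : X) = zero := by
  show qstar (imp (imp (qstar x) (qstar zero)) (qstar zero)) = zero
  rw [qw_st_zero, PreQW.imp_one, qw_st_one]

private lemma qw_qinf_zero_left (x : X) : qinf (zero : X) x = zero := by
  show qstar (imp (imp (qstar zero) (qstar x)) (qstar x)) = zero
  rw [qw_st_zero, PreQW.one_imp, PreQW.imp_self, qw_st_one]

/-- The key consequence of (QW) with `y := 0`:  `x = (x → d) → d` for `d = (x→z)*`. -/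
private lemma qw_M1a (x z : X) :
    imp (imp x (qstar (imp x z))) (qstar (imp x z)) = x := by
  have hqw := QW.qw x zero z
  rw [qw_qinf_zero, qw_qinf_zero_left] at hqw
  have h' : qstar x = qinf (qstar x) (imp x z) := hqw
  unfold qinf at h'
  rw [qw_ss] at h'
  have h2 := congrArg qstar h'
  rw [qw_ss, qw_ss] at h2
  exact h2.symm

/-- Any element of the form `w → (t → r)` is a fixpoint of `u ↦ (u → r) → r`. -/
private lemma qw_key2 (w t r : X) :
    imp (imp (imp w (imp t r)) r) r = imp w (imp t r) := by
  have h1 : imp w (imp t r) = imp (qstar r) (imp w (qstar t)) := by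
    conv_lhs => rw [← qw_ss r]
    rw [qw_swap_star t (qstar r), PreQW.exchange w (qstar r) (qstar t)]
  have hC2 := qw_M1a (qstar r) (imp w (qstar t))
  rw [← h1] at hC2
  have h2 : imp (imp w (imp t r))
      (qstar (imp (qstar r) (qstar (imp w (imp t r))))) = qstar r := by
    rw [qw_swap_star (imp w (imp t r)) (imp (qstar r) (qstar (imp w (imp t r))))]
    exact hC2
  have h3 := qw_M1a (imp w (imp t r)) (qstar (imp (qstar r) (qstar (imp w (imp t r)))))
  rw [h2, qw_ss] at h3
  exact h3

private lemma qw_leQ_iff (a b : X) :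
    qleQ a b ↔ qstar a = imp (imp (qstar a) (qstar b)) (qstar b) := by
  unfold qleQ qinf
  constructor
  · intro h1
    have h2 := congrArg qstar h1
    rwa [qw_ss] at h2
  · intro h1
    rw [← h1]
    exact (qw_ss a).symm

private lemma qw_leQ_refl (a : X) : qleQ a a := by
  rw [qw_leQ_iff, PreQW.imp_self, PreQW.one_imp]

private lemma qw_fix_trans {p q r : X} (h1 : p = imp (imp p q) q)
    (h2 : q = imp (imp q r) r) : p = imp (imp p r) r := by
  have hp : p = imp (imp q r) (imp (imp p q) r) := by
    calc p = imp (imp p q) q := h1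
    _ = imp (imp p q) (imp (imp q r) r) := congrArg (imp (imp p q)) h2
    _ = imp (imp q r) (imp (imp p q) r) := PreQW.exchange _ _ _
  have hk := qw_key2 (imp q r) (imp p q) r
  rw [hp]
  exact hk.symm

private lemma qw_leQ_trans {a b c : X} (h1 : qleQ a b) (h2 : qleQ b c) :
    qleQ a c := by
  rw [qw_leQ_iff] at h1 h2 ⊢
  exact qw_fix_trans h1 h2

private lemma qw_leQ_imp (y : X) {u z : X} (hu : qleQ u z) : qleQ u (imp y z) := by
  rw [qw_leQ_iff] at hu ⊢
  refine qw_fix_trans hu ?_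
  have h2 := qw_M1a (qstar z) (qstar y)
  rw [qw_swap_star (qstar z) y, qw_ss] at h2
  exact h2.symm

private lemma qw_leQ_prod_left (v : X) {u a : X} (hu : qleQ u a) :
    qleQ (qprod u v) (qprod a v) := by
  rw [qw_leQ_iff] at hu ⊢
  rw [qw_st_prod, qw_st_prod]
  have hE : imp u (qstar v) = imp (imp (qstar u) (qstar a)) (imp a (qstar v)) := by
    rw [qw_swap_star u v]
    conv_lhs => rw [hu]
    rw [PreQW.exchange v (imp (qstar u) (qstar a)) (qstar a), qw_swap_star v a]
  have hk := qw_key2 (imp (qstar u) (qstar a)) one (imp a (qstar v))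
  rw [PreQW.one_imp] at hk
  rw [hE]
  exact hk.symm

private lemma qw_leQ_prod_right (a : X) {v b : X} (hv : qleQ v b) :
    qleQ (qprod a v) (qprod a b) := by
  rw [qw_prod_comm a v, qw_prod_comm a b]
  exact qw_leQ_prod_left a hv

private lemma qw_leQ_zero {a : X} (ha : qleQ a (zero : X)) : a = zero := by
  have h1 : a = qinf a zero := ha
  rwa [qw_qinf_zero] at h1

end AuxLemmas


/-- Proposition 3.15: if every filter is a deductive system, then every maximal
filter is strongly maximal. -/
theorem qw_prop_3_15 {X : Type*} [QW X]
    (h : ∀ F : Set X, IsFilter F → IsDS F)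
    (F : Set X) (hF : IsMaximal F) : IsStronglyMaximal F := by
  obtain ⟨hFil, hne, hmax⟩ := hF
  refine ⟨hFil, ?_⟩
  intro x hx
  have hDS := h F hFil
  have h1F : (one : X) ∈ F := hDS.1
  let G : Set X := {z | ∃ n : ℕ, ∃ f, f ∈ F ∧ qleQ (qprod f (qpow x n)) z}
  have hGfil : IsFilter G := by
    refine ⟨⟨one, ⟨0, one, h1F, ?_⟩⟩, ?_, ?_⟩
    · rw [show qprod (one : X) (qpow x 0) = one from qw_prod_one one]
      exact qw_leQ_refl one
    · rintro a ⟨m, f, hf, hfa⟩ b ⟨n, g, hg, hgb⟩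
      refine ⟨m + n, qprod f g, hFil.2.1 f hf g hg, ?_⟩
      have e : qprod (qprod f g) (qpow x (m + n)) =
          qprod (qprod f (qpow x m)) (qprod g (qpow x n)) := by
        rw [qw_qpow_add, qw_prod_assoc f g _,
          ← qw_prod_assoc g (qpow x m) (qpow x n), qw_prod_comm g (qpow x m),
          qw_prod_assoc (qpow x m) g (qpow x n),
          ← qw_prod_assoc f (qpow x m) (qprod g (qpow x n))]
      rw [e]
      exact qw_leQ_trans (qw_leQ_prod_left _ hfa) (qw_leQ_prod_right _ hgb)
    · rintro a ⟨n, f, hf, hfa⟩ y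
      exact ⟨n, f, hf, qw_leQ_imp y hfa⟩
  have hFG : F ⊆ G := fun f hf =>
    ⟨0, f, hf, by
      rw [show qprod f (qpow x 0) = f from qw_prod_one f]
      exact qw_leQ_refl f⟩
  have hxG : x ∈ G := by
    refine ⟨1, one, h1F, ?_⟩
    have e1 : qprod (one : X) (qpow x 1) = x := by
      show qprod (one : X) (qprod x (qpow x 0)) = x
      rw [qw_one_prod]
      exact qw_prod_one x
    rw [e1]
    exact qw_leQ_refl x
  have hGuniv : G = Set.univ := by
    by_contra hGne
    have hGF := hmax G hGfil hFG hGne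
    rw [hGF] at hxG
    exact hx hxG
  have h0G : (zero : X) ∈ G := by
    rw [hGuniv]
    trivial
  obtain ⟨n, f, hf, hle⟩ := h0G
  have hprod0 : qprod f (qpow x n) = zero := qw_leQ_zero hle
  have himp : imp f (qstar (qpow x n)) = one := by
    have h2 := congrArg qstar hprod0
    rwa [qw_st_prod, qw_st_zero] at h2
  have hxnF : qstar (qpow x n) ∈ F := by
    refine hDS.2 f hf _ ?_
    rw [himp]
    exact h1F
  cases n with
  | zero =>
    exfalso
    have h0F : (zero : X) ∈ F := by
      have e2 : qstar (qpow x 0) = (zero : X) := qw_st_one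
      rwa [e2] at hxnF
    apply hne
    ext z
    simp only [Set.mem_univ, iff_true]
    have h3 := hFil.2.2 zero h0F (qstar z)
    rwa [show imp (qstar z) zero = z from qw_ss z] at h3
  | succ k => exact ⟨k + 1, by omega, hxnF⟩
end

section
/- Let X be a quantum-Wajsberg algebra. The following are equivalent: (a) X is weakly linear, i.e., for all x, y ∈ X, x→y = 1 or y→x = 1; (b) for all x, y ∈ X, x⊔y = y or y⊔x = x; (c) for all x, y ∈ X, x⊓y = y or y⊓x = x. -/
open PreQW

section Aux
variable {X : Type*} [PreQW X]

lemma qw_contrap (x y : X) : imp x y = imp (qstar y) (qstar x) := by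
  conv_lhs => rw [← PreQW.involutive y]
  rw [PreQW.exchange]; rfl

lemma qw_star_inj {x y : X} (h : qstar x = qstar y) : x = y := by
  have := congrArg (fun t => imp t PreQW.zero) h
  simpa [qstar, PreQW.involutive] using this

lemma qw_sup_eq_iff (x y : X) : qsup x y = y ↔ imp x y = PreQW.one := by
  constructor
  · intro h
    have h2 : imp x (imp (imp x y) y) = PreQW.one := by
      rw [PreQW.exchange, PreQW.imp_self]
    rw [show imp (imp x y) y = y from h] at h2
    exact h2
  · intro h
    simp [qsup, h, PreQW.one_imp]

lemma qw_inf_eq_iff (x y : X) : qinf x y = y ↔ imp y x = PreQW.one := by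
  rw [qw_contrap y x]
  rw [← qw_sup_eq_iff]
  unfold qinf
  constructor
  · intro h
    have : qstar (qstar (qsup (qstar x) (qstar y))) = qstar y := congrArg qstar h
    have h2 : qsup (qstar x) (qstar y) = qstar y := by
      simpa [qstar, PreQW.involutive] using this
    exact h2
  · intro h
    rw [show imp (imp (qstar x) (qstar y)) (qstar y) = qstar y from h]
    simpa [qstar] using PreQW.involutive y

end Aux

/-- Proposition 5.2: characterizations of weakly linear QW algebras. -/
theorem qw_prop_5_2 {X : Type*} [QW X] :
    ((∀ x y : X, imp x y = one ∨ imp y x = one) ↔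
      ∀ x y : X, qsup x y = y ∨ qsup y x = x) ∧
    ((∀ x y : X, imp x y = one ∨ imp y x = one) ↔
      ∀ x y : X, qinf x y = y ∨ qinf y x = x) := by
  constructor
  · constructor
    · intro h x y
      rcases h x y with h' | h'
      · exact Or.inl ((qw_sup_eq_iff x y).2 h')
      · exact Or.inr ((qw_sup_eq_iff y x).2 h')
    · intro h x y
      rcases h x y with h' | h'
      · exact Or.inl ((qw_sup_eq_iff x y).1 h')
      · exact Or.inr ((qw_sup_eq_iff y x).1 h')
  · constructor
    · intro h x y
      rcases h y x with h' | h'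
      · exact Or.inl ((qw_inf_eq_iff x y).2 h')
      · exact Or.inr ((qw_inf_eq_iff y x).2 h')
    · intro h x y
      rcases h y x with h' | h'
      · exact Or.inl ((qw_inf_eq_iff y x).1 h')
      · exact Or.inr ((qw_inf_eq_iff x y).1 h')
end

section
/- Let X be a quantum-Wajsberg algebra and F a deductive system of X. Then F is prime if and only if the quotient X/F is weakly linear, i.e., for all x, y ∈ X, x⊔y ≡_F y or y⊔x ≡_F x. -/
namespace PreQW

variable {X : Type*}

section
variable [PreQW X]

lemma star_star (a : X) : qstar (qstar a) = a := involutive a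

lemma contra (a b : X) : imp (qstar a) (qstar b) = imp b a := by
  show imp (imp a zero) (imp b zero) = imp b a
  rw [exchange, involutive]

lemma exch_star (a b : X) : imp a (qstar b) = imp b (qstar a) := exchange a b zero

lemma star_one : qstar (one : X) = zero := one_imp zero

lemma star_zero : qstar (zero : X) = one := imp_self zero

lemma inf_self (a : X) : qinf a a = a := by
  show qstar (imp (imp (qstar a) (qstar a)) (qstar a)) = a
  rw [imp_self, one_imp]; exact involutive a

lemma inf_one (a : X) : qinf a one = a := by
  show qstar (imp (imp (qstar a) (qstar one)) (qstar one)) = a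
  rw [star_one, involutive (qstar a)]
  exact involutive a

lemma one_inf (a : X) : qinf one a = a := by
  show qstar (imp (imp (qstar one) (qstar a)) (qstar a)) = a
  rw [star_one, zero_imp, one_imp]; exact involutive a

lemma inf_zero (a : X) : qinf a zero = zero := by
  show qstar (imp (imp (qstar a) (qstar zero)) (qstar zero)) = zero
  rw [star_zero, imp_one]
  show qstar one = zero
  exact star_one

lemma zero_inf (a : X) : qinf zero a = zero := by
  show qstar (imp (imp (qstar zero) (qstar a)) (qstar a)) = zero
  rw [star_zero, one_imp, imp_self]; exact one_imp zero

lemma qinf_star (a b : X) : qinf (qstar a) (qstar b) = qstar (qsup a b) := by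
  show qstar (imp (imp (qstar (qstar a)) (qstar (qstar b))) (qstar (qstar b)))
      = qstar (qsup a b)
  rw [star_star, star_star]; rfl

/-- Key lemma: if `a ≤_Q l` then `a → w = (l → a) → (l → w)` for all `w`. -/
lemma imp_of_qleQ {a l : X} (h : qleQ a l) (w : X) :
    imp a w = imp (imp l a) (imp l w) := by
  have h1 : qstar a = imp (imp (qstar a) (qstar l)) (qstar l) := by
    nth_rewrite 1 [show a = qinf a l from h]
    exact involutive _
  rw [contra] at h1
  calc imp a w = imp (qstar w) (qstar a) := (contra w a).symm
    _ = imp (qstar w) (imp (imp l a) (qstar l)) := by rw [h1]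
    _ = imp (imp l a) (imp (qstar w) (qstar l)) := exchange _ _ _
    _ = imp (imp l a) (imp l w) := by rw [contra]

lemma qleQ_refl (a : X) : qleQ a a := (inf_self a).symm

end

section
variable [QW X]

/-- `x ≤_Q z → x`. -/
lemma qleQ_imp (z x : X) : qleQ x (imp z x) := by
  have hq := QW.qw (X := X) (qstar x) zero (qstar z)
  rw [inf_zero, zero_inf, contra] at hq
  have hx : imp (qstar x) zero = x := involutive x
  rw [hx] at hq
  exact hq

/-- `(x ⊔ y) → y = x → y`. -/
lemma sup_imp (x y : X) : imp (qsup x y) y = imp x y := by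
  have hq := QW.qw (X := X) (qstar y) one (qstar x)
  rw [inf_one, imp_one, one_inf, contra, qinf_star, qinf_star] at hq
  have hys : imp y (qsup x y) = one := by
    show imp y (imp (imp x y) y) = one
    rw [exchange, PreQW.imp_self, imp_one]
  have habs : qsup y (qsup x y) = qsup x y := by
    show imp (imp y (qsup x y)) (qsup x y) = qsup x y
    rw [hys, one_imp]
  rw [habs, contra] at hq
  exact hq

/-- `y ≤_Q x ⊔ y`. -/
lemma qleQ_sup (x y : X) : qleQ y (qsup x y) := by
  have hy := imp_of_qleQ (qleQ_imp x y) zero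
  -- hy : imp y zero = imp (imp (imp x y) y) (imp (imp x y) zero)
  show y = qinf y (qsup x y)
  have : qinf y (qsup x y)
      = qstar (imp (imp (qstar y) (qstar (qsup x y))) (qstar (qsup x y))) := rfl
  rw [this, contra, sup_imp]
  show y = qstar (imp (imp x y) (qstar (qsup x y)))
  rw [exch_star]
  show y = qstar (imp (imp (imp x y) y) (imp (imp x y) zero))
  rw [← hy]
  exact (involutive y).symm

end

end PreQW

open PreQW
/-- Theorem 5.6: `F` is prime iff `X/F` is weakly linear. -/
theorem qw_thm_5_6 {X : Type*} [QW X] (F : Set X) (hF : IsDS F) :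
    (∀ x y : X, imp x y ∈ F ∨ imp y x ∈ F) ↔
      ∀ x y : X, equivF F (qsup x y) y ∨ equivF F (qsup y x) x := by
  constructor
  · intro h x y
    rcases h x y with hxy | hyx
    · left
      exact ⟨qsup x y, qleQ_refl _, qleQ_sup x y,
        by rw [PreQW.imp_self]; exact hF.1, by rw [sup_imp]; exact hxy⟩
    · right
      exact ⟨qsup y x, qleQ_refl _, qleQ_sup y x,
        by rw [PreQW.imp_self]; exact hF.1, by rw [sup_imp]; exact hyx⟩
  · intro h x y
    have key : ∀ a b : X, equivF F (qsup a b) b → imp a b ∈ F := by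
      rintro a b ⟨l, hs, hb, h1, h2⟩
      have hk := imp_of_qleQ hs b
      rw [sup_imp] at hk
      have hone : imp (imp l b) (imp (imp l (qsup a b)) (imp l b)) = one := by
        rw [exchange, PreQW.imp_self, imp_one]
      have := hF.2 _ h2 (imp (imp l (qsup a b)) (imp l b)) (by rw [hone]; exact hF.1)
      rwa [hk]
    rcases h x y with he | he
    · exact Or.inl (key x y he)
    · exact Or.inr (key y x he)
end
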